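/- Let R be a graded commutative 2-ring. Then the set of prime homogeneous ideals of R is empty if and only if the identity morphism of the tensor unit of R is the zero morphism (equivalently, every object of R is a zero object, i.e. R is equivalent to the zero category; equivalently, every morphism of R is invertible). -/

import Mathlib

open CategoryTheory CategoryTheory.Limits CategoryTheory.MonoidalCategory

universe w v u v' u' v'' u''

/-- A *graded commutative 2-ring*: an essentially small preadditive symmetric monoidal
category whose tensor product is additive in each variable and in which every object
is invertible for the tensor product. -/
class GradedComm2Ring (C : Type u) [Category.{v} C] [Preadditive C] [MonoidalCategory C]
    [SymmetricCategory C] [MonoidalPreadditive C] : Prop where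
  essentiallySmall : EssentiallySmall.{v} C
  invertible : ∀ g : C, ∃ g' : C, Nonempty (g ⊗ g' ≅ 𝟙_ C)
section IdealDef

variable (C : Type u) [Category.{v} C] [Preadditive C] [MonoidalCategory C]

/-- A *homogeneous ideal* of a graded commutative 2-ring: a family of subgroups
`I(g,h) ⊆ Hom(g,h)` closed under composition with arbitrary morphisms on either side
and under tensoring with arbitrary morphisms on either side. -/
structure HomIdeal where
  carrier : ∀ g h : C, AddSubgroup (g ⟶ h)
  comp_left : ∀ {g h h' : C} (r : g ⟶ h) (s : h ⟶ h'),
      r ∈ carrier g h → r ≫ s ∈ carrier g h'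
  comp_right : ∀ {g' g h : C} (t : g' ⟶ g) (r : g ⟶ h),
      r ∈ carrier g h → t ≫ r ∈ carrier g' h
  tensor_left : ∀ {g h g' h' : C} (s : g' ⟶ h') (r : g ⟶ h),
      r ∈ carrier g h → (s ⊗ₘ r) ∈ carrier (g' ⊗ g) (h' ⊗ h)
  tensor_right : ∀ {g h g' h' : C} (r : g ⟶ h) (s : g' ⟶ h'),
      r ∈ carrier g h → (r ⊗ₘ s) ∈ carrier (g ⊗ g') (h ⊗ h')

variable {C}

namespace HomIdeal

instance : PartialOrder (HomIdeal C) where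
  le I J := ∀ g h : C, I.carrier g h ≤ J.carrier g h
  le_refl I g h := le_rfl
  le_trans I J K h₁ h₂ g h := (h₁ g h).trans (h₂ g h)
  le_antisymm I J h₁ h₂ := by
    cases I; cases J
    congr
    funext g h
    exact le_antisymm (h₁ g h) (h₂ g h)

/-- A homogeneous ideal is *proper* if it contains no identity morphism. -/
def IsProper (I : HomIdeal C) : Prop := ∀ g : C, 𝟙 g ∉ I.carrier g g

/-- A proper homogeneous ideal is *prime* if whenever a composite belongs to it, one
of the factors belongs to it. -/
structure IsPrime (I : HomIdeal C) : Prop where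
  isProper : I.IsProper
  mem_or_mem : ∀ {g h l : C} (r : g ⟶ h) (s : h ⟶ l),
      r ≫ s ∈ I.carrier g l → r ∈ I.carrier g h ∨ s ∈ I.carrier h l

end HomIdeal

end IdealDef
section SpecDef

/-- The (homogeneous) spectrum: the set of prime homogeneous ideals. -/
def Spec (C : Type u) [Category.{v} C] [Preadditive C] [MonoidalCategory C] :=
  {p : HomIdeal C // p.IsPrime}

variable {C : Type u} [Category.{v} C] [Preadditive C] [MonoidalCategory C]

/-- The closed set `V(I) = {p : I ⊆ p}`. -/
def zeroLocus (I : HomIdeal C) : Set (Spec C) := {p | I ≤ p.1}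

/-- The basic open set `D_r = {p : r ∉ p}`. -/
def basicOpen {g h : C} (r : g ⟶ h) : Set (Spec C) := {p | r ∉ p.1.carrier g h}

/-- The Zariski topology on `Spec C`, whose closed sets are the sets `V(I)` for
homogeneous ideals `I`. -/
instance : TopologicalSpace (Spec C) :=
  TopologicalSpace.generateFrom {U : Set (Spec C) | ∃ I : HomIdeal C, U = (zeroLocus I)ᶜ}

end SpecDef

/-!
A maximal proper homogeneous ideal `M` is prime. If `r ≫ s ∈ M` with `r, s ∉ M`, maximality gives
identities `𝟙 x ∈ M ⊔ span r` and `𝟙 y ∈ M ⊔ span s`, so `𝟙 (x ⊗ y) = 𝟙 x ⊗ 𝟙 y ∈ M` as soon as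
`span r ⊗ span s ⊆ M`. That inclusion only needs `r ⊗ s ∈ M`, and `r ⊗ s` differs from
`(r ▷ h) ≫ (β_ h h).hom ≫ (h ◁ s) = (β_ g h).hom ≫ h ◁ (r ≫ s)` by an invertible scalar, because
every endomorphism of the invertible object `h ⊗ h`, in particular its symmetry, is the action
of an endomorphism of `𝟙_ C`. Zorn's lemma provides a maximal proper ideal once the zero ideal is
proper, i.e. once `𝟙 (𝟙_ C) ≠ 0`; if `𝟙 (𝟙_ C) = 0`, every object is zero and no ideal is proper.
-/

namespace CategoryTheory.MonoidalCategory

variable {C : Type u} [Category.{v} C] [MonoidalCategory C]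

def unitScalar (u : 𝟙_ C ⟶ 𝟙_ C) (X : C) : X ⟶ X :=
  (λ_ X).inv ≫ u ▷ X ≫ (λ_ X).hom

lemma unitScalar_comp_eq_comp_unitScalar (u : 𝟙_ C ⟶ 𝟙_ C) {X Y : C} (f : X ⟶ Y) :
    unitScalar u X ≫ f = f ≫ unitScalar u Y := by
  simp only [unitScalar, Category.assoc]
  rw [← leftUnitor_naturality, ← whisker_exchange_assoc, leftUnitor_inv_naturality_assoc]

lemma unitScalar_comp (u v : 𝟙_ C ⟶ 𝟙_ C) (X : C) :
    unitScalar (u ≫ v) X = unitScalar u X ≫ unitScalar v X := by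
  simp [unitScalar]

lemma unitScalar_id (X : C) : unitScalar (𝟙 (𝟙_ C)) X = 𝟙 X := by
  simp [unitScalar]

lemma unitScalar_unit (u : 𝟙_ C ⟶ 𝟙_ C) : unitScalar u (𝟙_ C) = u := by
  simp [unitScalar, unitors_equal, unitors_inv_equal]

lemma unitScalar_tensor (u : 𝟙_ C ⟶ 𝟙_ C) (X Y : C) :
    unitScalar u (X ⊗ Y) = unitScalar u X ▷ Y := by
  rw [unitScalar, unitScalar, leftUnitor_tensor_hom, leftUnitor_tensor_inv, whiskerRight_tensor]
  simp

lemma whiskerRight_injective_of_tensor_iso {Y Z : C} (ψ : Y ⊗ Z ≅ 𝟙_ C) {X X' : C}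
    {f g : X ⟶ X'} (h : f ▷ Y = g ▷ Y) : f = g := by
  have key : ∀ f' : X ⟶ X', f' = (ρ_ X).inv ≫ X ◁ ψ.inv ≫ (α_ X Y Z).inv ≫
      (f' ▷ Y) ▷ Z ≫ (α_ X' Y Z).hom ≫ X' ◁ ψ.hom ≫ (ρ_ X').hom := by
    intro f'
    rw [← whiskerRight_tensor_assoc, whisker_exchange_assoc, whiskerRight_id]
    simp
  rw [key f, key g, h]

lemma unitScalar_injective_of_tensor_iso {X X' : C} (φ : X ⊗ X' ≅ 𝟙_ C) {u v : 𝟙_ C ⟶ 𝟙_ C}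
    (h : unitScalar u X = unitScalar v X) : u = v := by
  have key : ∀ w : 𝟙_ C ⟶ 𝟙_ C, w = φ.inv ≫ unitScalar w X ▷ X' ≫ φ.hom := by
    intro w
    rw [← unitScalar_tensor, unitScalar_comp_eq_comp_unitScalar, Iso.inv_hom_id_assoc,
      unitScalar_unit]
  rw [key u, key v, h]

lemma exists_unitScalar_eq_of_tensor_iso [BraidedCategory C] {X X' : C} (φ : X ⊗ X' ≅ 𝟙_ C)
    (e : X ⟶ X) : ∃ u : 𝟙_ C ⟶ 𝟙_ C, unitScalar u X = e := by
  refine ⟨φ.inv ≫ e ▷ X' ≫ φ.hom, whiskerRight_injective_of_tensor_iso (β_ X' X ≪≫ φ) ?_⟩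
  rw [← unitScalar_tensor, ← Category.comp_id (unitScalar _ _), ← φ.hom_inv_id,
    ← Category.assoc, unitScalar_comp_eq_comp_unitScalar, Category.assoc, unitScalar_unit]
  simp

end CategoryTheory.MonoidalCategory

lemma CategoryTheory.Limits.IsZero.tensor_of_left {C : Type u} [Category.{v} C] [Preadditive C]
    [MonoidalCategory C] [MonoidalPreadditive C] {X : C} (hX : IsZero X) (Y : C) :
    IsZero (X ⊗ Y) := by
  rw [IsZero.iff_id_eq_zero, ← id_whiskerRight, hX.eq_zero_of_src (𝟙 X),
    MonoidalPreadditive.zero_whiskerRight]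

namespace HomIdeal

variable {C : Type u} [Category.{v} C] [Preadditive C] [MonoidalCategory C]

lemma comp_mem_comp (I : HomIdeal C) {g h g' h' : C} (a : g' ⟶ g) {f : g ⟶ h} (b : h ⟶ h')
    (hf : f ∈ I.carrier g h) : a ≫ f ≫ b ∈ I.carrier g' h' :=
  I.comp_right a _ (I.comp_left f b hf)

lemma tensor_tensor_mem_iff (I : HomIdeal C) {x y x' y' a b : C} (t : x ⟶ y) (c : x' ⟶ y')
    (f : a ⟶ b) :
    (t ⊗ₘ c) ⊗ₘ f ∈ I.carrier _ _ ↔ t ⊗ₘ (c ⊗ₘ f) ∈ I.carrier _ _ := by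
  constructor <;> intro h
  · rw [associator_inv_conjugation]; exact I.comp_mem_comp _ _ h
  · rw [associator_conjugation]; exact I.comp_mem_comp _ _ h

lemma tensor_mem_comm [BraidedCategory C] (I : HomIdeal C) {x y x' y' : C} {t : x ⟶ y}
    {t' : x' ⟶ y'} (h : t ⊗ₘ t' ∈ I.carrier _ _) : t' ⊗ₘ t ∈ I.carrier _ _ := by
  have : t' ⊗ₘ t = (β_ x x').inv ≫ (t ⊗ₘ t') ≫ (β_ y y').hom := by simp
  rw [this]
  exact I.comp_mem_comp _ _ h

def span {g h : C} (r : g ⟶ h) : HomIdeal C where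
  carrier x y := ⨅ (I : HomIdeal C) (_ : r ∈ I.carrier g h), I.carrier x y
  comp_left f c hf := by
    simp only [AddSubgroup.mem_iInf] at hf ⊢
    exact fun I hr => I.comp_left f c (hf I hr)
  comp_right c f hf := by
    simp only [AddSubgroup.mem_iInf] at hf ⊢
    exact fun I hr => I.comp_right c f (hf I hr)
  tensor_left c f hf := by
    simp only [AddSubgroup.mem_iInf] at hf ⊢
    exact fun I hr => I.tensor_left c f (hf I hr)
  tensor_right f c hf := by
    simp only [AddSubgroup.mem_iInf] at hf ⊢
    exact fun I hr => I.tensor_right f c (hf I hr)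

lemma mem_span_self {g h : C} (r : g ⟶ h) : r ∈ (span r).carrier g h :=
  AddSubgroup.mem_iInf.2 fun _ => AddSubgroup.mem_iInf.2 id

lemma span_le {I : HomIdeal C} {g h : C} {r : g ⟶ h} (hr : r ∈ I.carrier g h) : span r ≤ I :=
  fun _ _ _ hf => AddSubgroup.mem_iInf.1 (AddSubgroup.mem_iInf.1 hf I) hr

lemma tensor_mem_of_comp_mem [SymmetricCategory C] (M : HomIdeal C) {g h l k : C}
    (φ : (h ⊗ h) ⊗ k ≅ 𝟙_ C) {r : g ⟶ h} {s : h ⟶ l} (hrs : r ≫ s ∈ M.carrier g l) :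
    r ⊗ₘ s ∈ M.carrier (g ⊗ h) (h ⊗ l) := by
  obtain ⟨ε, hε⟩ := exists_unitScalar_eq_of_tensor_iso φ (β_ h h).hom
  have hεε : ε ≫ ε = 𝟙 _ := unitScalar_injective_of_tensor_iso φ <| by
    rw [unitScalar_comp, hε, SymmetricCategory.symmetry, unitScalar_id]
  -- `β_ h h` acts by the scalar `ε`, so it can be pulled out of the composite
  have key : unitScalar ε (g ⊗ h) ≫ (r ⊗ₘ s) = (β_ g h).hom ≫ h ◁ (r ≫ s) := by
    rw [MonoidalCategory.tensorHom_def, ← Category.assoc, unitScalar_comp_eq_comp_unitScalar,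
      Category.assoc, hε, BraidedCategory.braiding_naturality_left_assoc, whiskerLeft_comp]
  have hmem : h ◁ (r ≫ s) ∈ M.carrier (h ⊗ g) (h ⊗ l) := by
    simpa using M.tensor_left (𝟙 h) _ hrs
  rw [← Category.id_comp (r ⊗ₘ s), ← unitScalar_id, ← hεε, unitScalar_comp, Category.assoc, key]
  exact M.comp_right _ _ (M.comp_right _ _ hmem)

section Chain

variable {c : Set (HomIdeal C)}

lemma mem_iSup_carrier_iff (hc : IsChain (· ≤ ·) c) (hne : c.Nonempty) {x y : C} {f : x ⟶ y} :
    f ∈ ⨆ I : c, (I : HomIdeal C).carrier x y ↔ ∃ I ∈ c, f ∈ I.carrier x y := by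
  have := hne.to_subtype
  rw [AddSubgroup.mem_iSup_of_directed]
  · simp
  · exact hc.directed.mono_comp _ fun I J hIJ => hIJ x y

def chainSup (hc : IsChain (· ≤ ·) c) (hne : c.Nonempty) : HomIdeal C where
  carrier x y := ⨆ I : c, (I : HomIdeal C).carrier x y
  comp_left f s hf := by
    obtain ⟨I, hI, hf⟩ := (mem_iSup_carrier_iff hc hne).1 hf
    exact (mem_iSup_carrier_iff hc hne).2 ⟨I, hI, I.comp_left f s hf⟩
  comp_right t f hf := by
    obtain ⟨I, hI, hf⟩ := (mem_iSup_carrier_iff hc hne).1 hf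
    exact (mem_iSup_carrier_iff hc hne).2 ⟨I, hI, I.comp_right t f hf⟩
  tensor_left s f hf := by
    obtain ⟨I, hI, hf⟩ := (mem_iSup_carrier_iff hc hne).1 hf
    exact (mem_iSup_carrier_iff hc hne).2 ⟨I, hI, I.tensor_left s f hf⟩
  tensor_right f s hf := by
    obtain ⟨I, hI, hf⟩ := (mem_iSup_carrier_iff hc hne).1 hf
    exact (mem_iSup_carrier_iff hc hne).2 ⟨I, hI, I.tensor_right f s hf⟩

lemma le_chainSup (hc : IsChain (· ≤ ·) c) (hne : c.Nonempty) {I : HomIdeal C}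
    (hI : I ∈ c) : I ≤ chainSup hc hne :=
  fun _ _ _ hf => (mem_iSup_carrier_iff hc hne).2 ⟨I, hI, hf⟩

lemma isProper_chainSup (hc : IsChain (· ≤ ·) c) (hne : c.Nonempty)
    (hproper : ∀ I ∈ c, I.IsProper) : (chainSup hc hne).IsProper := by
  intro x hx
  obtain ⟨I, hI, hx⟩ := (mem_iSup_carrier_iff hc hne).1 hx
  exact hproper I hI x hx

end Chain

variable [MonoidalPreadditive C]

def colon [BraidedCategory C] (I : HomIdeal C) {a b : C} (f : a ⟶ b) : HomIdeal C where
  carrier x y := (I.carrier (x ⊗ a) (y ⊗ b)).comap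
    (AddMonoidHom.mk' (· ⊗ₘ f) fun t t' => MonoidalPreadditive.add_tensor t t' f)
  comp_left t c ht := by
    have : (t ≫ c) ⊗ₘ f = (t ⊗ₘ f) ≫ c ▷ b := by
      rw [← tensorHom_id, tensorHom_comp_tensorHom, Category.comp_id]
    simpa [this] using I.comp_left _ _ ht
  comp_right c t ht := by
    have : (c ≫ t) ⊗ₘ f = c ▷ a ≫ (t ⊗ₘ f) := by
      rw [← tensorHom_id, tensorHom_comp_tensorHom, Category.id_comp]
    simpa [this] using I.comp_right _ _ ht
  tensor_left c t ht := (I.tensor_tensor_mem_iff c t f).2 (I.tensor_left c _ ht)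
  tensor_right {x y x' y'} t c ht := by
    have h₁ := (I.tensor_tensor_mem_iff t f c).1 (I.tensor_right _ c ht)
    have h₂ : t ⊗ₘ (c ⊗ₘ f) =
        (𝟙 x ⊗ₘ (β_ x' a).hom) ≫ (t ⊗ₘ (f ⊗ₘ c)) ≫ (𝟙 y ⊗ₘ (β_ y' b).inv) := by
      rw [tensorHom_comp_tensorHom, tensorHom_comp_tensorHom,
        ← BraidedCategory.braiding_naturality_assoc]
      simp
    exact (I.tensor_tensor_mem_iff t c f).2 (h₂ ▸ I.comp_mem_comp _ _ h₁)

lemma tensor_mem_of_mem_span [BraidedCategory C] {M : HomIdeal C}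
    {g h g' h' : C} {r : g ⟶ h} {s : g' ⟶ h'} (hrs : r ⊗ₘ s ∈ M.carrier _ _)
    {x y x' y' : C} {t : x ⟶ y} {t' : x' ⟶ y'} (ht : t ∈ (span r).carrier x y)
    (ht' : t' ∈ (span s).carrier x' y') : t ⊗ₘ t' ∈ M.carrier _ _ := by
  have hts : s ⊗ₘ t ∈ M.carrier _ _ := M.tensor_mem_comm (span_le (I := M.colon s) hrs x y ht)
  exact M.tensor_mem_comm (span_le (I := M.colon t) hts x' y' ht')

instance : SemilatticeSup (HomIdeal C) where
  sup I J :=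
    { carrier x y := I.carrier x y ⊔ J.carrier x y
      comp_left f c hf := by
        obtain ⟨m, hm, n, hn, rfl⟩ := AddSubgroup.mem_sup.1 hf
        exact AddSubgroup.mem_sup.2 ⟨_, I.comp_left m c hm, _, J.comp_left n c hn,
          (Preadditive.add_comp _ _ _ _ _ _).symm⟩
      comp_right c f hf := by
        obtain ⟨m, hm, n, hn, rfl⟩ := AddSubgroup.mem_sup.1 hf
        exact AddSubgroup.mem_sup.2 ⟨_, I.comp_right c m hm, _, J.comp_right c n hn,
          (Preadditive.comp_add _ _ _ _ _ _).symm⟩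
      tensor_left c f hf := by
        obtain ⟨m, hm, n, hn, rfl⟩ := AddSubgroup.mem_sup.1 hf
        exact AddSubgroup.mem_sup.2 ⟨_, I.tensor_left c m hm, _, J.tensor_left c n hn,
          (MonoidalPreadditive.tensor_add _ _ _).symm⟩
      tensor_right f c hf := by
        obtain ⟨m, hm, n, hn, rfl⟩ := AddSubgroup.mem_sup.1 hf
        exact AddSubgroup.mem_sup.2 ⟨_, I.tensor_right m c hm, _, J.tensor_right n c hn,
          (MonoidalPreadditive.add_tensor _ _ _).symm⟩ }
  le_sup_left _ _ _ _ := le_sup_left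
  le_sup_right _ _ _ _ := le_sup_right
  sup_le _ _ _ hI hJ x y := sup_le (hI x y) (hJ x y)

lemma mem_sup {I J : HomIdeal C} {x y : C} {f : x ⟶ y} :
    f ∈ (I ⊔ J).carrier x y ↔ ∃ m ∈ I.carrier x y, ∃ n ∈ J.carrier x y, m + n = f :=
  AddSubgroup.mem_sup

lemma tensor_mem_of_mem_sup {M I J : HomIdeal C}
    (hIJ : ∀ {x y x' y' : C} {t : x ⟶ y} {t' : x' ⟶ y'}, t ∈ I.carrier x y →
      t' ∈ J.carrier x' y' → t ⊗ₘ t' ∈ M.carrier _ _)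
    {x y x' y' : C} {f : x ⟶ y} {f' : x' ⟶ y'} (hf : f ∈ (M ⊔ I).carrier x y)
    (hf' : f' ∈ (M ⊔ J).carrier x' y') : f ⊗ₘ f' ∈ M.carrier _ _ := by
  obtain ⟨m, hm, t, ht, rfl⟩ := mem_sup.1 hf
  obtain ⟨m', hm', t', ht', rfl⟩ := mem_sup.1 hf'
  rw [MonoidalPreadditive.add_tensor, MonoidalPreadditive.tensor_add t]
  exact add_mem (M.tensor_right m _ hm)
    (add_mem (M.tensor_left t m' hm') (hIJ ht ht'))

lemma exists_id_mem_sup_span {M : HomIdeal C} (hM : Maximal IsProper M) {g h : C}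
    {r : g ⟶ h} (hr : r ∉ M.carrier g h) : ∃ x : C, 𝟙 x ∈ (M ⊔ span r).carrier x x := by
  by_contra! hproper
  exact hr (hM.2 hproper le_sup_left g h (le_sup_right (a := M) g h (mem_span_self r)))

theorem isPrime_of_maximal [SymmetricCategory C]
    (hinv : ∀ X : C, ∃ X' : C, Nonempty (X ⊗ X' ≅ 𝟙_ C)) {M : HomIdeal C}
    (hM : Maximal IsProper M) : M.IsPrime := by
  refine ⟨hM.prop, fun {g h l} r s hrs => ?_⟩
  by_contra! hnot
  obtain ⟨x, hx⟩ := exists_id_mem_sup_span hM hnot.1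
  obtain ⟨y, hy⟩ := exists_id_mem_sup_span hM hnot.2
  obtain ⟨k, ⟨φ⟩⟩ := hinv (h ⊗ h)
  apply hM.prop (x ⊗ y)
  rw [← id_tensorHom_id]
  exact tensor_mem_of_mem_sup (tensor_mem_of_mem_span (M.tensor_mem_of_comp_mem φ hrs)) hx hy

instance : Bot (HomIdeal C) where
  bot :=
    { carrier _ _ := ⊥
      comp_left _ _ hf := by rw [AddSubgroup.mem_bot] at hf ⊢; simp [hf]
      comp_right _ _ hf := by rw [AddSubgroup.mem_bot] at hf ⊢; simp [hf]
      tensor_left _ _ hf := by rw [AddSubgroup.mem_bot] at hf ⊢; simp [hf]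
      tensor_right _ _ hf := by rw [AddSubgroup.mem_bot] at hf ⊢; simp [hf] }

lemma isProper_bot (hinv : ∀ X : C, ∃ X' : C, Nonempty (X ⊗ X' ≅ 𝟙_ C))
    (h : 𝟙 (𝟙_ C) ≠ 0) : (⊥ : HomIdeal C).IsProper := by
  intro g hg
  obtain ⟨g', ⟨φ⟩⟩ := hinv g
  have hg : IsZero g := (IsZero.iff_id_eq_zero g).2 (AddSubgroup.mem_bot.1 hg)
  exact h (((hg.tensor_of_left g').of_iso φ.symm).eq_of_src _ _)

theorem exists_isPrime [SymmetricCategory C]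
    (hinv : ∀ X : C, ∃ X' : C, Nonempty (X ⊗ X' ≅ 𝟙_ C)) (h : 𝟙 (𝟙_ C) ≠ 0) :
    ∃ p : HomIdeal C, p.IsPrime := by
  obtain ⟨M, -, hM⟩ := zorn_le_nonempty₀ {I : HomIdeal C | I.IsProper}
    (fun c hproper hc I hI => ⟨chainSup hc ⟨I, hI⟩, isProper_chainSup hc ⟨I, hI⟩ hproper,
      fun _ hJ => le_chainSup hc ⟨I, hI⟩ hJ⟩) ⊥ (isProper_bot hinv h)
  exact ⟨M, isPrime_of_maximal hinv hM⟩

end HomIdeal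

/-- **Statement 9.** The spectrum of a graded commutative 2-ring is empty if and only
if the identity of the tensor unit is zero; equivalently, every object is a zero
object (the category is equivalent to the zero category); equivalently, every
morphism is invertible. -/
theorem spec_empty_iff_trivial
    {C : Type u} [Category.{v} C] [Preadditive C] [MonoidalCategory C]
    [SymmetricCategory C] [MonoidalPreadditive C] [GradedComm2Ring C] :
    (IsEmpty (Spec C) ↔ 𝟙 (𝟙_ C) = 0) ∧
    (𝟙 (𝟙_ C) = 0 ↔ ∀ x : C, IsZero x) ∧
    (𝟙 (𝟙_ C) = 0 ↔ ∀ {g h : C} (f : g ⟶ h), IsIso f) := by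
  have hzero : 𝟙 (𝟙_ C) = 0 ↔ ∀ x : C, IsZero x :=
    ⟨fun h x => (((IsZero.iff_id_eq_zero _).2 h).tensor_of_left x).of_iso (λ_ x).symm,
      fun h => (h _).eq_of_src _ _⟩
  refine ⟨⟨fun hempty => ?_, fun h => ?_⟩, hzero, ⟨fun h g h' f => ?_, fun h => ?_⟩⟩
  · by_contra h
    obtain ⟨p, hp⟩ := HomIdeal.exists_isPrime GradedComm2Ring.invertible h
    exact hempty.false ⟨p, hp⟩
  · exact ⟨fun p => p.2.isProper _ (h ▸ zero_mem _)⟩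
  · exact (hzero.1 h g).isIso (hzero.1 h h') f
  · exact isIsoZeroSelfEquiv _ (h 0)
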